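/- arXiv:2401.12604 — 8 statements merged into one kernel-verified Lean document; each statement's English description precedes it below -/
import Mathlib

section
/- Let G₀ be a graph on vertex set [N] with no clique of size K and no independent set of size K, and let h : [M] → [N]. Define a graph G on vertex set [M] by joining u ≠ v iff h(u) = h(v) or (h(u), h(v)) is an edge of G₀. Then any set S ⊆ [M] of size t(K-1) that is a clique or an independent set in G contains t elements with the same image under h. -/
lemma clique_card_le' {V : Type*} [DecidableEq V] (H : SimpleGraph V) (K : ℕ)
    (hc : ∀ s : Finset V, ¬ H.IsNClique K s) (T : Finset V)
    (hT : H.IsClique (T : Set V)) : T.card ≤ K - 1 := by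
  by_contra hlt
  push_neg at hlt
  have hK : K ≤ T.card := by omega
  obtain ⟨u, huT, hu⟩ := Finset.exists_subset_card_eq hK
  exact hc u ⟨hT.subset (by exact_mod_cast huT), hu⟩

/-- Graph hash product: a clique or independent set of size `t(K-1)` in the
hash product graph contains a `t`-collision of `h`. -/
theorem hash_product_collision (N M K t : ℕ) (hK : 2 ≤ K) (ht : 0 < t)
    (G₀ : SimpleGraph (Fin N))
    (hclique : ∀ s : Finset (Fin N), ¬ G₀.IsNClique K s)
    (hindep : ∀ s : Finset (Fin N), ¬ (G₀ᶜ).IsNClique K s)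
    (h : Fin M → Fin N)
    (G : SimpleGraph (Fin M))
    (hG : ∀ u v : Fin M, G.Adj u v ↔ u ≠ v ∧ (h u = h v ∨ G₀.Adj (h u) (h v)))
    (S : Finset (Fin M)) (hS : S.card = t * (K - 1))
    (hSclique : G.IsClique (S : Set (Fin M)) ∨ (Gᶜ).IsClique (S : Set (Fin M))) :
    ∃ s ⊆ S, s.card = t ∧ ∃ y : Fin N, ∀ x ∈ s, h x = y := by
  set T : Finset (Fin N) := S.image h with hT
  have hTcard : T.card ≤ K - 1 := by
    rcases hSclique with hc | hc
    · apply clique_card_le' G₀ K hclique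
      intro a ha b hb hab
      simp only [hT, Finset.coe_image, Set.mem_image, Finset.mem_coe] at ha hb
      obtain ⟨x, hx, rfl⟩ := ha
      obtain ⟨y, hy, rfl⟩ := hb
      have hxy : x ≠ y := fun e => hab (by rw [e])
      have := (hG x y).1 (hc hx hy hxy)
      tauto
    · apply clique_card_le' G₀ᶜ K hindep
      intro a ha b hb hab
      simp only [hT, Finset.coe_image, Set.mem_image, Finset.mem_coe] at ha hb
      obtain ⟨x, hx, rfl⟩ := ha
      obtain ⟨y, hy, rfl⟩ := hb
      have hxy : x ≠ y := fun e => hab (by rw [e])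
      have := hc hx hy hxy
      rw [SimpleGraph.compl_adj, hG] at this
      refine ⟨hab, ?_⟩
      tauto
  have hmaps : ∀ x ∈ S, h x ∈ T := fun x hx => Finset.mem_image_of_mem h hx
  have hmul : T.card * t ≤ S.card := by
    rw [hS, Nat.mul_comm]
    exact Nat.mul_le_mul_left t hTcard
  obtain ⟨y, hyT, hy⟩ := Finset.exists_le_card_fiber_of_mul_le_card_of_maps_to hmaps
    (by
      have hTne : T.Nonempty := by
        rw [hT]
        apply Finset.Nonempty.image
        rw [← Finset.card_pos, hS]
        exact Nat.mul_pos ht (by omega)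
      exact hTne) hmul
  obtain ⟨s, hsub, hscard⟩ := Finset.exists_subset_card_eq hy
  refine ⟨s, le_trans hsub (Finset.filter_subset _ _), hscard, y, fun x hx => ?_⟩
  exact (Finset.mem_filter.1 (hsub hx)).2
end

section
/- Let G₀ be a graph on [N] with no clique of size K and no independent set of size K, let M ≥ (t-1)·N + 1, and suppose M ≥ R(t(K-1), t(K-1)) so that every graph on M vertices has a clique or independent set of size t(K-1). Then for any h : [M] → [N], the hash-product graph G = G₀ ⊗ h on [M] contains a set of t(K-1) vertices forming a clique or independent set, and from any such set one can extract t distinct elements of [M] with equal h-value. -/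
/-- Reduction of the generalized pigeonhole to Ramsey via the hash product. -/
theorem pigeon_to_ramsey (N M K t : ℕ) (hK : 2 ≤ K) (ht : 0 < t)
    (hM : (t - 1) * N + 1 ≤ M)
    (G₀ : SimpleGraph (Fin N))
    (hclique : ∀ s : Finset (Fin N), ¬ G₀.IsNClique K s)
    (hindep : ∀ s : Finset (Fin N), ¬ (G₀ᶜ).IsNClique K s)
    (hRamsey : ∀ H : SimpleGraph (Fin M), ∃ S : Finset (Fin M),
      S.card = t * (K - 1) ∧
        (H.IsClique (S : Set (Fin M)) ∨ (Hᶜ).IsClique (S : Set (Fin M))))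
    (h : Fin M → Fin N) :
    ∃ S : Finset (Fin M), S.card = t * (K - 1) ∧
      ((SimpleGraph.fromRel fun u v : Fin M => h u = h v ∨ G₀.Adj (h u) (h v)).IsClique
          (S : Set (Fin M)) ∨
        ((SimpleGraph.fromRel fun u v : Fin M => h u = h v ∨ G₀.Adj (h u) (h v))ᶜ).IsClique
          (S : Set (Fin M))) ∧
      ∃ s ⊆ S, s.card = t ∧ ∃ y : Fin N, ∀ x ∈ s, h x = y := by
  classical
  set G := SimpleGraph.fromRel fun u v : Fin M => h u = h v ∨ G₀.Adj (h u) (h v) with hG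
  obtain ⟨S, hScard, hcase⟩ := hRamsey G
  refine ⟨S, hScard, hcase, ?_⟩
  have hK1 : 0 < K - 1 := by omega
  rcases hcase with hcl | hind
  · -- clique case: fibers of h on S
    set T := S.image h with hT
    have hTcl : G₀.IsClique (T : Set (Fin N)) := by
      intro a ha b hb hab
      simp only [hT, Finset.coe_image, Set.mem_image, Finset.mem_coe] at ha hb
      obtain ⟨u, hu, rfl⟩ := ha
      obtain ⟨v, hv, rfl⟩ := hb
      have huv : u ≠ v := fun e => hab (by rw [e])
      have hadj := hcl (Finset.mem_coe.2 hu) (Finset.mem_coe.2 hv) huv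
      rw [hG, SimpleGraph.fromRel_adj] at hadj
      rcases hadj.2 with (e | adj) | (e | adj)
      · exact absurd e hab
      · exact adj
      · exact absurd e.symm hab
      · exact adj.symm
    have hTle : T.card ≤ K - 1 := by
      by_contra hc
      push_neg at hc
      have hKle : K ≤ T.card := by omega
      obtain ⟨U, hUsub, hUcard⟩ := Finset.exists_subset_card_eq hKle
      exact hclique U ⟨hTcl.subset (by exact_mod_cast Finset.coe_subset.2 hUsub), hUcard⟩
    have hmul : T.card * (t - 1) < S.card := by
      calc T.card * (t - 1) ≤ (K - 1) * (t - 1) := Nat.mul_le_mul_right _ hTle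
        _ < t * (K - 1) := by
          rw [Nat.mul_comm]
          exact Nat.mul_lt_mul_of_lt_of_le (by omega) le_rfl hK1
        _ = S.card := hScard.symm
    obtain ⟨y, _, hylt⟩ := Finset.exists_lt_card_fiber_of_mul_lt_card_of_maps_to
      (fun x hx => Finset.mem_image_of_mem h hx) hmul
    have htle : t ≤ (S.filter fun x => h x = y).card := by omega
    obtain ⟨s, hssub, hscard⟩ := Finset.exists_subset_card_eq htle
    refine ⟨s, hssub.trans (Finset.filter_subset _ _), hscard, y,
      fun x hx => (Finset.mem_filter.1 (hssub hx)).2⟩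
  · -- independent case
    rcases Nat.lt_or_ge t 2 with ht2 | ht2
    · -- t = 1 : any singleton works
      have ht1 : t = 1 := by omega
      have : 0 < S.card := by rw [hScard]; exact Nat.mul_pos ht hK1
      obtain ⟨x, hx⟩ := Finset.card_pos.1 this
      exact ⟨{x}, Finset.singleton_subset_iff.2 hx, by simp [ht1], h x, by simp⟩
    · -- t ≥ 2 : contradiction with hindep
      exfalso
      have hinj : Set.InjOn h (S : Set (Fin M)) := by
        intro u hu v hv he
        by_contra huv
        have hadj := hind hu hv huv
        rw [SimpleGraph.compl_adj, hG, SimpleGraph.fromRel_adj] at hadj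
        exact hadj.2 ⟨huv, Or.inl (Or.inl he)⟩
      set T := S.image h with hT
      have hTcard : T.card = t * (K - 1) := by
        rw [hT, Finset.card_image_of_injOn hinj, hScard]
      have hTcl : (G₀ᶜ).IsClique (T : Set (Fin N)) := by
        intro a ha b hb hab
        simp only [hT, Finset.coe_image, Set.mem_image, Finset.mem_coe] at ha hb
        obtain ⟨u, hu, rfl⟩ := ha
        obtain ⟨v, hv, rfl⟩ := hb
        have huv : u ≠ v := fun e => hab (by rw [e])
        have hadj := hind (Finset.mem_coe.2 hu) (Finset.mem_coe.2 hv) huv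
        rw [SimpleGraph.compl_adj, hG, SimpleGraph.fromRel_adj] at hadj
        refine ⟨hab, fun adj => hadj.2 ⟨huv, Or.inl (Or.inr adj)⟩⟩
      have hKle : K ≤ T.card := by
        rw [hTcard]
        calc K ≤ 2 * (K - 1) := by omega
          _ ≤ t * (K - 1) := Nat.mul_le_mul_right _ ht2
      obtain ⟨U, hUsub, hUcard⟩ := Finset.exists_subset_card_eq hKle
      exact hindep U ⟨hTcl.subset (by exact_mod_cast Finset.coe_subset.2 hUsub), hUcard⟩
end

section
/- If N and K satisfy binom(N,K) · 2^(1 - K(K-1)/2) < 1, then there exists a graph on N vertices with no clique of size K and no independent set of size K. -/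
open Finset

/-- Number of boolean functions with prescribed value on a finset `T`. -/
lemma count_fixed_bool {α : Type*} [Fintype α] [DecidableEq α] (T : Finset α) (b : Bool) :
    (Finset.univ.filter (fun f : α → Bool => ∀ a ∈ T, f a = b)).card
      = 2 ^ (Fintype.card α - T.card) := by
  rw [← Fintype.card_subtype]
  have e : {f : α → Bool // ∀ a ∈ T, f a = b} ≃ ({a : α // a ∉ T} → Bool) :=
    { toFun := fun f x => f.1 x.1
      invFun := fun g =>
        ⟨fun a => if h : a ∈ T then b else g ⟨a, h⟩, fun a ha => by simp [ha]⟩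
      left_inv := by
        rintro ⟨f, hf⟩
        ext a
        by_cases h : a ∈ T
        · simp [h, hf a h]
        · simp [h]
      right_inv := by
        rintro g
        ext ⟨a, ha⟩
        simp [ha] }
  rw [Fintype.card_congr e, Fintype.card_fun, Fintype.card_bool]
  congr 1
  rw [Fintype.card_subtype_compl, Fintype.card_coe]

/-- Erdős probabilistic lower bound for diagonal Ramsey numbers: if
`C(N,K) · 2^(1 - K(K-1)/2) < 1` then there is a graph on `N` vertices with no
clique of size `K` and no independent set of size `K`. -/
theorem erdos_ramsey_lower_bound (N K : ℕ)
    (h : (N.choose K : ℝ) * (2 : ℝ) ^ ((1 : ℝ) - (K : ℝ) * ((K : ℝ) - 1) / 2) < 1) :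
    ∃ G : SimpleGraph (Fin N),
      (∀ s : Finset (Fin N), ¬ G.IsNClique K s) ∧
      (∀ s : Finset (Fin N), ¬ (Gᶜ).IsNClique K s) := by
  classical
  by_cases hNK : N < K
  · refine ⟨⊥, ?_, ?_⟩ <;>
    · intro s hs
      have := hs.card_eq
      have hle : s.card ≤ N := by
        simpa using Finset.card_le_card (Finset.subset_univ s)
      omega
  push_neg at hNK
  -- Numeric step: `C(N,K) * 2 < 2 ^ (K.choose 2)` over ℕ.
  have hnum : N.choose K * 2 < 2 ^ K.choose 2 := by
    have hc2 : ((K.choose 2 : ℕ) : ℝ) = (K : ℝ) * ((K : ℝ) - 1) / 2 :=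
      Nat.cast_choose_two (K := ℝ) K
    have hpow : (2 : ℝ) ^ ((1 : ℝ) - (K : ℝ) * ((K : ℝ) - 1) / 2)
        = 2 / (2 : ℝ) ^ (K.choose 2 : ℕ) := by
      rw [← hc2, Real.rpow_sub (by norm_num), Real.rpow_one, Real.rpow_natCast]
    rw [hpow] at h
    have hp : (0 : ℝ) < (2 : ℝ) ^ (K.choose 2 : ℕ) := by positivity
    have : (N.choose K : ℝ) * 2 < (2 : ℝ) ^ (K.choose 2 : ℕ) := by
      rw [← mul_div_assoc] at h
      exact (div_lt_one hp).mp h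
    exact_mod_cast this
  set α := Sym2 (Fin N)
  set M := Fintype.card α with hM
  -- the set of edges inside a vertex set `s`
  set T : Finset (Fin N) → Finset α := fun s => s.offDiag.image Sym2.mk.uncurry with hT
  have hTcard : ∀ s : Finset (Fin N), s.card = K → (T s).card = K.choose 2 := by
    intro s hs
    rw [hT]
    rw [Sym2.card_image_offDiag, hs]
  -- bad colourings
  set Bad : Finset (α → Bool) :=
    (Finset.powersetCard K (Finset.univ : Finset (Fin N))).biUnion
      (fun s => Finset.univ.filter (fun f : α → Bool => ∀ a ∈ T s, f a = true)
        ∪ Finset.univ.filter (fun f : α → Bool => ∀ a ∈ T s, f a = false)) with hBad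
  -- pick some set of size K to see `K.choose 2 ≤ M`
  obtain ⟨s₀, -, hs₀⟩ := Finset.exists_subset_card_eq (s := (Finset.univ : Finset (Fin N)))
    (n := K) (by simpa using hNK)
  have hcM : K.choose 2 ≤ M := by
    rw [← hTcard s₀ hs₀]
    exact (Finset.card_le_univ _).trans_eq rfl
  have hBadcard : Bad.card < 2 ^ M := by
    calc Bad.card ≤ ∑ s ∈ Finset.powersetCard K (Finset.univ : Finset (Fin N)),
          (Finset.univ.filter (fun f : α → Bool => ∀ a ∈ T s, f a = true)
            ∪ Finset.univ.filter (fun f : α → Bool => ∀ a ∈ T s, f a = false)).card :=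
        Finset.card_biUnion_le
      _ ≤ ∑ s ∈ Finset.powersetCard K (Finset.univ : Finset (Fin N)),
          (2 ^ (M - K.choose 2) + 2 ^ (M - K.choose 2)) := by
          apply Finset.sum_le_sum
          intro s hs
          rw [Finset.mem_powersetCard_univ] at hs
          refine (Finset.card_union_le _ _).trans ?_
          rw [count_fixed_bool, count_fixed_bool, hTcard s hs]
      _ = N.choose K * 2 * 2 ^ (M - K.choose 2) := by
          rw [Finset.sum_const, Finset.card_powersetCard, Finset.card_univ, Fintype.card_fin]
          ring
      _ < 2 ^ K.choose 2 * 2 ^ (M - K.choose 2) := by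
          exact mul_lt_mul_of_pos_right hnum (pow_pos two_pos _)
      _ = 2 ^ M := by
          rw [← pow_add, Nat.add_sub_cancel' hcM]
  -- there is a good colouring
  have : ∃ f : α → Bool, f ∉ Bad := by
    by_contra hcon
    push_neg at hcon
    have : (Finset.univ : Finset (α → Bool)) ⊆ Bad := fun f _ => hcon f
    have hcard := Finset.card_le_card this
    rw [Finset.card_univ, Fintype.card_fun, Fintype.card_bool, ← hM] at hcard
    omega
  obtain ⟨f, hf⟩ := this
  refine ⟨SimpleGraph.mk (fun a b => a ≠ b ∧ f s(a, b) = true)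
    ⟨fun a b hab => by
      refine ⟨hab.1.symm, ?_⟩
      rw [Sym2.eq_swap]; exact hab.2⟩
    ⟨fun a hab => hab.1 rfl⟩, ?_, ?_⟩
  · intro s hs
    apply hf
    rw [hBad, Finset.mem_biUnion]
    refine ⟨s, Finset.mem_powersetCard_univ.mpr hs.card_eq, ?_⟩
    apply Finset.mem_union_left
    rw [Finset.mem_filter]
    refine ⟨Finset.mem_univ _, ?_⟩
    intro e he
    rw [hT, Finset.mem_image] at he
    obtain ⟨⟨a, b⟩, hab, rfl⟩ := he
    rw [Finset.mem_offDiag] at hab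
    exact (hs.isClique hab.1 hab.2.1 hab.2.2).2
  · intro s hs
    apply hf
    rw [hBad, Finset.mem_biUnion]
    refine ⟨s, Finset.mem_powersetCard_univ.mpr hs.card_eq, ?_⟩
    apply Finset.mem_union_right
    rw [Finset.mem_filter]
    refine ⟨Finset.mem_univ _, ?_⟩
    intro e he
    rw [hT, Finset.mem_image] at he
    obtain ⟨⟨a, b⟩, hab, rfl⟩ := he
    rw [Finset.mem_offDiag] at hab
    have := hs.isClique hab.1 hab.2.1 hab.2.2
    rw [SimpleGraph.compl_adj] at this
    have h2 := this.2
    simp only [not_and] at h2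
    have := h2 this.1
    simpa using this
end

section
/- Let F be a family of conjunctions of degree ≤ d over variables x₁,…,xₙ such that every t of them are jointly inconsistent (the product of any t distinct members of F is identically zero as a multilinear polynomial), with (t−1)d² ≤ n. Then for any degree-D pseudoexpectation operator E~ with D ≥ (t−1)d², we have ∑_{C ∈ F} E~[C] ≤ t − 1. -/
noncomputable def Econj (n : ℕ) (E : Finset (Fin n) → ℝ)
    (S T : Finset (Fin n)) : ℝ :=
  ∑ A ∈ T.powerset, (-1 : ℝ) ^ A.card * E (S ∪ A)

/-- `x` satisfies the conjunction `C_{S,T}` encoded as the pair `p = (S,T)`. -/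
def Sat (n : ℕ) (x : Fin n → Bool) (p : Finset (Fin n) × Finset (Fin n)) : Prop :=
  (∀ i ∈ p.1, x i = true) ∧ (∀ j ∈ p.2, x j = false)

/-!
`E S` is the pseudoexpectation of the monomial `∏_{i ∈ S} x_i`, so expanding `∏_{j ∈ T} (1 - x_j)`
shows that `Econj n E S T` is `Ẽ[C_{S,T}]`; a pair `(S, T)` also encodes the partial assignment
setting `S` true and `T` false.

Query variables adaptively. Given a partial assignment (`S` true, `T` false) under
which every surviving conjunction has at most `w` unset variables, pick a maximal pairwise
consistent family `M` of surviving conjunctions. It has fewer than `t` members, so querying all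
of its at most `(t-1)w` unset variables costs `(t-1)w` degree, and afterwards every surviving
conjunction outside `M` has lost a variable, since it conflicts with some member of `M`.
After `d` rounds, of total degree `(t-1)(d + (d-1) + ⋯ + 1) ≤ (t-1)d²`, every surviving
conjunction is decided; at each leaf at most `t - 1` of them are satisfied and `Ẽ` of the leaf
is nonnegative, and the splitting
identity `Ẽ[C_{S,T}] = Ẽ[C_{S+i,T}] + Ẽ[C_{S,T+i}]` sums the leaves back up.
-/

open Finset

namespace DecisionTree

section Consistency

variable {α : Type*}

def Consistent (p q : Finset α × Finset α) : Prop := Disjoint p.1 q.2 ∧ Disjoint q.1 p.2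

theorem Consistent.symm {p q : Finset α × Finset α} (h : Consistent p q) : Consistent q p :=
  ⟨h.2, h.1⟩

theorem Consistent.mono {p q r : Finset α × Finset α} (h : Consistent p r)
    (h₁ : q.1 ⊆ r.1) (h₂ : q.2 ⊆ r.2) : Consistent p q :=
  ⟨h.1.mono_right h₂, h.2.mono_left h₁⟩

variable [DecidableEq α]

def vars (p : Finset α × Finset α) : Finset α := p.1 ∪ p.2

theorem not_disjoint_union_of_not_consistent {p q : Finset α × Finset α}
    (h : ¬ Consistent p q) : ¬ Disjoint (p.1 ∪ q.1) (p.2 ∪ q.2) := by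
  intro hd
  exact h ⟨disjoint_of_subset_left subset_union_left (hd.mono_right subset_union_right),
    disjoint_of_subset_left subset_union_right (hd.mono_right subset_union_left)⟩

theorem exists_mem_vars_of_not_consistent {p q r : Finset α × Finset α}
    (hp : Consistent p r) (hq : Consistent q r) (hpq : ¬ Consistent p q) :
    ∃ v ∈ vars p, v ∈ vars q ∧ v ∉ r.1 ∪ r.2 := by
  simp only [Consistent, not_and_or, not_disjoint_iff] at hpq
  rcases hpq with ⟨v, hvp, hvq⟩ | ⟨v, hvq, hvp⟩
  · refine ⟨v, mem_union_left _ hvp, mem_union_right _ hvq, ?_⟩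
    rw [mem_union, not_or]
    exact ⟨fun hv => disjoint_left.mp hq.2 hv hvq, disjoint_left.mp hp.1 hvp⟩
  · refine ⟨v, mem_union_right _ hvp, mem_union_left _ hvq, ?_⟩
    rw [mem_union, not_or]
    exact ⟨fun hv => disjoint_left.mp hp.2 hv hvp, disjoint_left.mp hq.1 hvq⟩

theorem exists_maximal_pairwise_consistent (L : Finset (Finset α × Finset α))
    (hL : ∀ p ∈ L, Disjoint p.1 p.2) :
    ∃ M ⊆ L, (∀ p ∈ M, ∀ q ∈ M, Consistent p q) ∧
      ∀ p ∈ L, p ∈ M ∨ ∃ m ∈ M, ¬ Consistent p m := by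
  classical
  set C := L.powerset.filter fun M => ∀ p ∈ M, ∀ q ∈ M, Consistent p q
  obtain ⟨M, hMC, hMmax⟩ := exists_max_image C card ⟨∅, by simp [C]⟩
  obtain ⟨hML, hMcons⟩ := mem_filter.mp hMC
  refine ⟨M, mem_powerset.mp hML, hMcons, fun p hpL => ?_⟩
  by_contra! h
  obtain ⟨hpM, hpcons⟩ := h
  have hins : insert p M ∈ C := by
    refine mem_filter.mpr ⟨mem_powerset.mpr (insert_subset hpL (mem_powerset.mp hML)), ?_⟩
    simp only [mem_insert, forall_eq_or_imp]
    exact ⟨⟨⟨hL p hpL, hL p hpL⟩, hpcons⟩, fun q hq => ⟨(hpcons q hq).symm, hMcons q hq⟩⟩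
  have := hMmax _ hins
  rw [card_insert_of_notMem hpM] at this
  omega

theorem card_sdiff_lt_of_mem {X U U' : Finset α} {v : α} (hU : U ⊆ U') (hvX : v ∈ X)
    (hvU : v ∉ U) (hvU' : v ∈ U') : #(X \ U') < #(X \ U) :=
  card_lt_card <| (ssubset_iff_of_subset (sdiff_subset_sdiff subset_rfl hU)).mpr
    ⟨v, mem_sdiff.mpr ⟨hvX, hvU⟩, fun h => (mem_sdiff.mp h).2 hvU'⟩

theorem disjoint_union_union_sdiff {S T Q A : Finset α} (hST : Disjoint S T)
    (hQ : Disjoint Q (S ∪ T)) (hAQ : A ⊆ Q) : Disjoint (S ∪ A) (T ∪ (Q \ A)) := by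
  have hAST : Disjoint A (S ∪ T) := hQ.mono_left hAQ
  have hQAST : Disjoint (Q \ A) (S ∪ T) := hQ.mono_left sdiff_subset
  rw [disjoint_union_left, disjoint_union_right, disjoint_union_right]
  exact ⟨⟨hST, (hQAST.mono_right subset_union_left).symm⟩,
    hAST.mono_right subset_union_right, disjoint_sdiff⟩

theorem union_union_union_sdiff {S T Q A : Finset α} (hAQ : A ⊆ Q) :
    S ∪ A ∪ (T ∪ (Q \ A)) = S ∪ T ∪ Q := by
  ext x
  have := @hAQ x
  simp only [mem_union, mem_sdiff]
  tauto

theorem card_union_add_card_union_sdiff_le {S T Q A : Finset α} (hAQ : A ⊆ Q) :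
    #(S ∪ A) + #(T ∪ (Q \ A)) ≤ #S + #T + #Q := by
  have hS := card_union_le S A
  have hT := card_union_le T (Q \ A)
  have hA := card_sdiff_add_card_eq_card hAQ
  omega

end Consistency

section Satisfiability

variable {n t : ℕ}

theorem exists_sat_of_pairwise_consistent (G : Finset (Finset (Fin n) × Finset (Fin n)))
    (hG : ∀ p ∈ G, ∀ q ∈ G, Consistent p q) : ∃ x : Fin n → Bool, ∀ p ∈ G, Sat n x p := by
  refine ⟨fun i => decide (i ∈ G.biUnion Prod.fst), fun p hp => ⟨fun i hi => ?_, fun j hj => ?_⟩⟩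
  · exact decide_eq_true (mem_biUnion.mpr ⟨p, hp, hi⟩)
  · refine decide_eq_false fun hj' => ?_
    obtain ⟨q, hq, hjq⟩ := mem_biUnion.mp hj'
    exact disjoint_left.mp (hG q hq p hp).1 hjq hj

theorem card_lt_of_pairwise_consistent {F G : Finset (Finset (Fin n) × Finset (Fin n))}
    (hincons : ∀ G ⊆ F, G.card = t → ¬ ∃ x : Fin n → Bool, ∀ p ∈ G, Sat n x p)
    (hGF : G ⊆ F) (hG : ∀ p ∈ G, ∀ q ∈ G, Consistent p q) : #G < t := by
  by_contra! h
  obtain ⟨G', hG'G, hG't⟩ := exists_subset_card_eq h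
  exact hincons G' (hG'G.trans hGF) hG't <|
    exists_sat_of_pairwise_consistent G' fun p hp q hq => hG p (hG'G hp) q (hG'G hq)

end Satisfiability

section Pseudoexpectation

variable {n : ℕ} (E : Finset (Fin n) → ℝ)

theorem econj_eq_zero_of_not_disjoint {S T : Finset (Fin n)} (h : ¬ Disjoint S T) :
    Econj n E S T = 0 := by
  obtain ⟨i, hiS, hiT⟩ := not_disjoint_iff.mp h
  rw [Econj, ← insert_erase hiT, sum_powerset_insert (notMem_erase i T), ← sum_add_distrib]
  refine sum_eq_zero fun A hA => ?_
  have hiA : i ∉ A := fun h => notMem_erase i T (mem_powerset.mp hA h)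
  rw [card_insert_of_notMem hiA, union_insert, insert_eq_self.mpr (mem_union_left A hiS),
    pow_succ]
  ring

theorem econj_eq_add_insert (S T : Finset (Fin n)) (i : Fin n) :
    Econj n E S T = Econj n E (insert i S) T + Econj n E S (insert i T) := by
  by_cases hiT : i ∈ T
  · rw [insert_eq_self.mpr hiT,
      econj_eq_zero_of_not_disjoint E (not_disjoint_iff.mpr ⟨i, mem_insert_self i S, hiT⟩),
      zero_add]
  · have hflip : ∀ A ∈ T.powerset, (-1 : ℝ) ^ #(insert i A) * E (S ∪ insert i A) =
        -((-1 : ℝ) ^ #A * E (insert i S ∪ A)) := fun A hA => by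
      rw [card_insert_of_notMem fun h => hiT (mem_powerset.mp hA h), union_insert,
        ← insert_union, pow_succ]
      ring
    rw [Econj, Econj, Econj, sum_powerset_insert hiT, sum_congr rfl hflip, sum_neg_distrib]
    ring

theorem econj_eq_sum_powerset (S T Q : Finset (Fin n)) :
    Econj n E S T = ∑ A ∈ Q.powerset, Econj n E (S ∪ A) (T ∪ (Q \ A)) := by
  induction Q using Finset.induction_on with
  | empty => simp
  | insert i Q hiQ ih =>
    rw [sum_powerset_insert hiQ, ih, ← sum_add_distrib]
    refine sum_congr rfl fun A hA => ?_
    have hiA : i ∉ A := fun h => hiQ (mem_powerset.mp hA h)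
    rw [insert_sdiff_of_notMem _ hiA, insert_sdiff_insert, sdiff_insert_of_notMem hiQ,
      union_insert, union_insert, econj_eq_add_insert E _ _ i, add_comm]

theorem sum_econj_le_of_forall_powerset (F : Finset (Finset (Fin n) × Finset (Fin n))) (c : ℝ)
    (S T Q : Finset (Fin n))
    (h : ∀ A ⊆ Q, ∑ p ∈ F, Econj n E (p.1 ∪ (S ∪ A)) (p.2 ∪ (T ∪ (Q \ A))) ≤
      c * Econj n E (S ∪ A) (T ∪ (Q \ A))) :
    ∑ p ∈ F, Econj n E (p.1 ∪ S) (p.2 ∪ T) ≤ c * Econj n E S T :=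
  calc ∑ p ∈ F, Econj n E (p.1 ∪ S) (p.2 ∪ T)
      = ∑ A ∈ Q.powerset, ∑ p ∈ F, Econj n E (p.1 ∪ (S ∪ A)) (p.2 ∪ (T ∪ (Q \ A))) := by
        rw [sum_comm]
        refine sum_congr rfl fun p _ => ?_
        rw [econj_eq_sum_powerset E _ _ Q]
        simp only [union_assoc]
    _ ≤ ∑ A ∈ Q.powerset, c * Econj n E (S ∪ A) (T ∪ (Q \ A)) :=
        sum_le_sum fun A hA => h A (mem_powerset.mp hA)
    _ = c * Econj n E S T := by rw [← mul_sum, ← econj_eq_sum_powerset]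

theorem econj_union_eq_zero_of_not_consistent {p : Finset (Fin n) × Finset (Fin n)}
    {S T : Finset (Fin n)} (h : ¬ Consistent p (S, T)) :
    Econj n E (p.1 ∪ S) (p.2 ∪ T) = 0 :=
  econj_eq_zero_of_not_disjoint E (not_disjoint_union_of_not_consistent h)

end Pseudoexpectation

section Bound

variable {n D t : ℕ} {E : Finset (Fin n) → ℝ} {F : Finset (Finset (Fin n) × Finset (Fin n))}

theorem sum_econj_le_of_vars_subset
    (hincons : ∀ G ⊆ F, G.card = t → ¬ ∃ x : Fin n → Bool, ∀ p ∈ G, Sat n x p)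
    (hnonneg : ∀ S T : Finset (Fin n), Disjoint S T → S.card + T.card ≤ D →
      0 ≤ Econj n E S T)
    {S T : Finset (Fin n)} (hST : Disjoint S T) (hD : #S + #T ≤ D)
    (hdecided : ∀ p ∈ F, Consistent p (S, T) → vars p ⊆ S ∪ T) :
    ∑ p ∈ F, Econj n E (p.1 ∪ S) (p.2 ∪ T) ≤ (t - 1 : ℝ) * Econj n E S T := by
  classical
  set G := F.filter fun p => Consistent p (S, T)
  have hsub : ∀ p ∈ F, Consistent p (S, T) → p.1 ⊆ S ∧ p.2 ⊆ T := fun p hp hpST =>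
    ⟨Disjoint.left_le_of_le_sup_right (subset_union_left.trans (hdecided p hp hpST)) hpST.1,
      Disjoint.left_le_of_le_sup_left (subset_union_right.trans (hdecided p hp hpST)) hpST.2.symm⟩
  have hterm : ∀ p ∈ F, Econj n E (p.1 ∪ S) (p.2 ∪ T) =
      if Consistent p (S, T) then Econj n E S T else 0 := fun p hp => by
    split_ifs with hpST
    · rw [union_eq_right.mpr (hsub p hp hpST).1, union_eq_right.mpr (hsub p hp hpST).2]
    · exact econj_union_eq_zero_of_not_consistent E hpST
  have hG : #G < t := by
    refine card_lt_of_pairwise_consistent hincons (filter_subset _ _) fun p hp q hq => ?_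
    obtain ⟨hpF, hpST⟩ := mem_filter.mp hp
    obtain ⟨hqF, hqST⟩ := mem_filter.mp hq
    exact ⟨hST.mono (hsub p hpF hpST).1 (hsub q hqF hqST).2,
      hST.mono (hsub q hqF hqST).1 (hsub p hpF hpST).2⟩
  have hGt : (#G : ℝ) ≤ t - 1 := by
    have : (#G : ℝ) + 1 ≤ t := by exact_mod_cast hG
    linarith
  calc ∑ p ∈ F, Econj n E (p.1 ∪ S) (p.2 ∪ T) = #G * Econj n E S T := by
        rw [sum_congr rfl hterm, ← sum_filter, sum_const, nsmul_eq_mul]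
    _ ≤ (t - 1 : ℝ) * Econj n E S T := mul_le_mul_of_nonneg_right hGt (hnonneg S T hST hD)

theorem card_biUnion_vars_sdiff_le {M : Finset (Finset (Fin n) × Finset (Fin n))}
    {U : Finset (Fin n)} {w : ℕ} (h : ∀ m ∈ M, #(vars m \ U) ≤ w) :
    #(M.biUnion vars \ U) ≤ #M * w :=
  calc #(M.biUnion vars \ U) ≤ #(M.biUnion fun m => vars m \ U) := by
        refine card_le_card fun x => ?_
        simp only [mem_sdiff, mem_biUnion]
        rintro ⟨⟨m, hm, hx⟩, hxU⟩
        exact ⟨m, hm, hx, hxU⟩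
    _ ≤ ∑ m ∈ M, #(vars m \ U) := card_biUnion_le
    _ ≤ #M * w := by simpa using sum_le_card_nsmul M _ w h

theorem sum_econj_le_of_card_vars_sdiff_le
    (hincons : ∀ G ⊆ F, G.card = t → ¬ ∃ x : Fin n → Bool, ∀ p ∈ G, Sat n x p)
    (hnonneg : ∀ S T : Finset (Fin n), Disjoint S T → S.card + T.card ≤ D →
      0 ≤ Econj n E S T)
    (hself : ∀ p ∈ F, Disjoint p.1 p.2) (w : ℕ) {S T : Finset (Fin n)} (hST : Disjoint S T)
    (hD : #S + #T + (t - 1) * w ^ 2 ≤ D)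
    (hfree : ∀ p ∈ F, Consistent p (S, T) → #(vars p \ (S ∪ T)) ≤ w) :
    ∑ p ∈ F, Econj n E (p.1 ∪ S) (p.2 ∪ T) ≤ (t - 1 : ℝ) * Econj n E S T := by
  classical
  induction w generalizing S T with
  | zero =>
    refine sum_econj_le_of_vars_subset hincons hnonneg hST (by simpa using hD) fun p hp hpST => ?_
    exact sdiff_eq_empty_iff_subset.mp (card_eq_zero.mp (Nat.le_zero.mp (hfree p hp hpST)))
  | succ w ih =>
    obtain ⟨M, hML, hMcons, hMmax⟩ := exists_maximal_pairwise_consistent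
      (F.filter fun p => Consistent p (S, T)) fun p hp => hself p (mem_filter.mp hp).1
    have hMt : #M < t :=
      card_lt_of_pairwise_consistent hincons (hML.trans (filter_subset _ _)) hMcons
    set Q := M.biUnion vars \ (S ∪ T)
    have hQ : #Q ≤ (t - 1) * (w + 1) :=
      (card_biUnion_vars_sdiff_le fun m hm => hfree m (mem_filter.mp (hML hm)).1
        (mem_filter.mp (hML hm)).2).trans (Nat.mul_le_mul_right _ (by omega))
    have hcover : M.biUnion vars ⊆ S ∪ T ∪ Q := by
      rw [union_sdiff_self_eq_union]
      exact subset_union_right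
    refine sum_econj_le_of_forall_powerset E F _ S T Q fun A hAQ => ih ?_ ?_ ?_
    · exact disjoint_union_union_sdiff hST sdiff_disjoint hAQ
    · have hcard := card_union_add_card_union_sdiff_le (S := S) (T := T) hAQ
      have hsq : (t - 1) * (w + 1) + (t - 1) * w ^ 2 ≤ (t - 1) * (w + 1) ^ 2 := by
        rw [← mul_add]
        exact Nat.mul_le_mul_left _ (by nlinarith)
      omega
    · intro p hp hpA
      have hpST : Consistent p (S, T) := hpA.mono subset_union_left subset_union_left
      rw [union_union_union_sdiff hAQ]
      rcases hMmax p (mem_filter.mpr ⟨hp, hpST⟩) with hpM | ⟨m, hmM, hpm⟩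
      · rw [sdiff_eq_empty_iff_subset.mpr ((subset_biUnion_of_mem vars hpM).trans hcover),
          card_empty]
        exact Nat.zero_le w
      · obtain ⟨v, hvp, hvm, hvST⟩ :=
          exists_mem_vars_of_not_consistent hpST (mem_filter.mp (hML hmM)).2 hpm
        have hlt := card_sdiff_lt_of_mem (U := S ∪ T) subset_union_left hvp hvST
          (hcover (mem_biUnion.mpr ⟨m, hmM, hvm⟩))
        have := hfree p hp hpST
        omega

end Bound

end DecisionTree

open DecisionTree in
theorem decision_tree_bound_general (n d D t : ℕ)
    (hD : (t - 1) * d ^ 2 ≤ D)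
    (F : Finset (Finset (Fin n) × Finset (Fin n)))
    (hdeg : ∀ p ∈ F, Disjoint p.1 p.2 ∧ p.1.card + p.2.card ≤ d)
    (hincons : ∀ G ⊆ F, G.card = t → ¬ ∃ x : Fin n → Bool, ∀ p ∈ G, Sat n x p)
    (E : Finset (Fin n) → ℝ) (hnorm : E ∅ = 1)
    (hnonneg : ∀ S T : Finset (Fin n), Disjoint S T → S.card + T.card ≤ D →
      0 ≤ Econj n E S T) :
    ∑ p ∈ F, Econj n E p.1 p.2 ≤ (t : ℝ) - 1 := by
  have hfree : ∀ p ∈ F, Consistent p (∅, ∅) → #(vars p \ (∅ ∪ ∅)) ≤ d := fun p hp _ => by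
    rw [union_empty, sdiff_empty]
    exact (card_union_le p.1 p.2).trans (hdeg p hp).2
  have hbound := sum_econj_le_of_card_vars_sdiff_le hincons hnonneg (fun p hp => (hdeg p hp).1) d
    (disjoint_empty_left ∅) (by simpa using hD) hfree
  have hE : Econj n E ∅ ∅ = 1 := by simp [Econj, hnorm]
  simpa only [union_empty, hE, mul_one] using hbound

/-- Decision-tree bound: if every `t` distinct conjunctions of a degree-`≤ d`
family `F` are jointly inconsistent, with `(t-1)d² ≤ n`, then any degree
`D ≥ (t-1)d²` pseudoexpectation gives `∑_{C ∈ F} Ẽ[C] ≤ t - 1`. -/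
theorem decision_tree_bound (n d D t : ℕ) (ht : 1 ≤ t)
    (hn : (t - 1) * d ^ 2 ≤ n) (hD : (t - 1) * d ^ 2 ≤ D)
    (F : Finset (Finset (Fin n) × Finset (Fin n)))
    (hdeg : ∀ p ∈ F, Disjoint p.1 p.2 ∧ p.1.card + p.2.card ≤ d)
    (hincons : ∀ G ⊆ F, G.card = t → ¬ ∃ x : Fin n → Bool, ∀ p ∈ G, Sat n x p)
    (E : Finset (Fin n) → ℝ) (hnorm : E ∅ = 1)
    (hnonneg : ∀ S T : Finset (Fin n), Disjoint S T → S.card + T.card ≤ D →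
      0 ≤ Econj n E S T) :
    ∑ p ∈ F, Econj n E p.1 p.2 ≤ (t : ℝ) - 1 :=
  decision_tree_bound_general n d D t hD F hdeg hincons E hnorm hnonneg
end

section
/- Consider the search problem of finding a (t+1)-collision for a map from M ≥ tN+1 pigeons to N holes, restricted by a partial assignment ρ which assigns at most tN/2 pigeons to holes such that no hole has more than t pigeons by ρ. Then any deterministic decision tree solving the restricted problem requires Ω(N) queries: an adversary can answer each query of an unassigned pigeon with a hole currently containing at most t−1 pigeons, for Ω(N) queries, without creating a (t+1)-collision. -/
/-!
The adversary maintains a partial assignment with at most `t` pigeons per hole. A query to an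
unassigned pigeon is answered with a hole holding fewer than `t` pigeons, which exists while
fewer than `tN` pigeons are assigned. At a leaf, every unassigned pigeon is sent to a hole other
than the claimed one, which then holds at most `t` pigeons, so the claimed `(t+1)`-collision is
wrong. Starting from `ρ`, which assigns at most `tN/2` pigeons, this defeats every tree of depth
less than `N/2 ≤ tN/2`.
-/

/-- Decision trees that query the hole of a pigeon and output a claimed
`(t+1)`-collision: a set of pigeons together with a hole. -/
inductive QTree (M N : ℕ) : Type where
  | leaf : Finset (Fin M) → Fin N → QTree M N
  | node : Fin M → (Fin N → QTree M N) → QTree M N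

namespace QTree

def depth {M N : ℕ} : QTree M N → ℕ
  | .leaf _ _ => 0
  | .node _ br => 1 + Finset.univ.sup fun h => (br h).depth

def run {M N : ℕ} : QTree M N → (Fin M → Fin N) → Finset (Fin M) × Fin N
  | .leaf s h, _ => (s, h)
  | .node p br, f => (br (f p)).run f

end QTree

open Finset Function

section PartialAssignment

variable {α β : Type*}

def Extends (f : α → β) (σ : α → Option β) : Prop :=
  ∀ p h, σ p = some h → f p = h

lemma extends_getD (σ : α → Option β) (b : β) : Extends (fun p => (σ p).getD b) σ :=
  fun p h hp => by simp [hp]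

lemma filter_getD_eq_eq_some [Fintype α] [DecidableEq β] (σ : α → Option β) {b h : β}
    (hbh : b ≠ h) :
    univ.filter (fun p => (σ p).getD b = h) = univ.filter fun p => σ p = some h := by
  ext p
  cases hp : σ p <;> simp [hp, hbh]

lemma Extends.of_update [DecidableEq α] {f : α → β} {σ : α → Option β} {p : α} {b : β}
    (hp : σ p = none) (hf : Extends f (update σ p (some b))) : Extends f σ := by
  intro q h hq
  have hqp : q ≠ p := by rintro rfl; simp [hp] at hq
  exact hf q h (by rwa [update_of_ne hqp])

lemma Extends.apply_eq_of_update [DecidableEq α] {f : α → β} {σ : α → Option β} {p : α}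
    {b : β} (hf : Extends f (update σ p (some b))) : f p = b :=
  hf p b (update_self ..)

lemma card_isSome_update [Fintype α] [DecidableEq α] {σ : α → Option β} {p : α}
    (hp : σ p = none) (b : β) :
    #{q | (update σ p (some b) q).isSome} = #{q | (σ q).isSome} + 1 := by
  have : univ.filter (fun q => (update σ p (some b) q).isSome) =
      insert p (univ.filter fun q => (σ q).isSome) := by
    ext q
    by_cases hq : q = p <;> simp [hq, update_apply]
  rw [this, card_insert_of_notMem (by simp [hp])]

lemma card_eq_some_update_le [Fintype α] [DecidableEq α] [DecidableEq β] {σ : α → Option β}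
    {p : α} (hp : σ p = none) {b : β} {t : ℕ} (hb : #{q | σ q = some b} < t)
    (hload : ∀ h, #{q | σ q = some h} ≤ t) (h : β) :
    #{q | update σ p (some b) q = some h} ≤ t := by
  by_cases hbh : b = h
  · subst hbh
    have : univ.filter (fun q => update σ p (some b) q = some b) =
        insert p (univ.filter fun q => σ q = some b) := by
      ext q
      by_cases hq : q = p <;> simp [hq, update_apply]
    rw [this]
    exact (card_insert_le _ _).trans hb
  · have : univ.filter (fun q => update σ p (some b) q = some h) =
        univ.filter fun q => σ q = some h := by
      ext q
      by_cases hq : q = p <;> simp [hq, update_apply, hp, hbh]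
    rw [this]
    exact hload h

lemma exists_card_eq_some_lt [Fintype α] [Fintype β] [DecidableEq β] (σ : α → Option β)
    {t : ℕ} (hσ : #{p | (σ p).isSome} < t * Fintype.card β) :
    ∃ b, #{p | σ p = some b} < t := by
  obtain ⟨y, hy, hfiber⟩ := exists_card_fiber_lt_of_card_lt_mul (f := σ)
    (t := univ.map Embedding.some) (by simpa [mul_comm] using hσ)
  obtain ⟨b, -, rfl⟩ := mem_map.mp hy
  refine ⟨b, ?_⟩
  convert hfiber using 2
  ext p
  cases hp : σ p <;> simp [hp]

end PartialAssignment

def IsCollision {α β : Type*} (t : ℕ) (f : α → β) (c : Finset α × β) : Prop :=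
  #c.1 = t + 1 ∧ ∀ p ∈ c.1, f p = c.2

lemma not_isCollision_of_card_fiber_le {α β : Type*} [Fintype α] [DecidableEq β] {t : ℕ}
    {f : α → β} {c : Finset α × β} (hf : #{p | f p = c.2} ≤ t) : ¬ IsCollision t f c := by
  rintro ⟨hcard, hc⟩
  have : #c.1 ≤ #{p | f p = c.2} := card_le_card fun p hp => by simpa using hc p hp
  omega

namespace QTree

variable {M N : ℕ}

lemma depth_lt_depth_node (p : Fin M) (br : Fin N → QTree M N) (h : Fin N) :
    (br h).depth < (node p br).depth := by
  have := le_sup (f := fun h => (br h).depth) (mem_univ h)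
  simp only [depth]
  omega

lemma run_node_of_apply_eq {p : Fin M} {br : Fin N → QTree M N} {f : Fin M → Fin N} {b : Fin N}
    (hf : f p = b) : (node p br).run f = (br b).run f := by
  simp [run, hf]

theorem exists_extends_not_isCollision_run [Nontrivial (Fin N)] {t : ℕ} (T : QTree M N)
    (σ : Fin M → Option (Fin N)) (hload : ∀ h, #{p | σ p = some h} ≤ t)
    (hbudget : #{p | (σ p).isSome} + T.depth < t * N) :
    ∃ f, Extends f σ ∧ ¬ IsCollision t f (T.run f) := by
  induction T generalizing σ with
  | leaf s h =>
    obtain ⟨b, hbh⟩ := exists_ne h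
    refine ⟨fun p => (σ p).getD b, extends_getD σ b, not_isCollision_of_card_fiber_le ?_⟩
    rw [run, filter_getD_eq_eq_some σ hbh]
    exact hload h
  | node p br ih =>
    cases hp : σ p with
    | some b =>
      obtain ⟨f, hf, hbad⟩ := ih b σ hload (by have := depth_lt_depth_node p br b; omega)
      exact ⟨f, hf, by rwa [run_node_of_apply_eq (hf p b hp)]⟩
    | none =>
      have hdepth := depth_lt_depth_node p br
      obtain ⟨b, hb⟩ := exists_card_eq_some_lt σ (t := t) (by rw [Fintype.card_fin]; omega)
      have hcard := card_isSome_update hp b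
      obtain ⟨f, hf, hbad⟩ := ih b (update σ p (some b)) (card_eq_some_update_le hp hb hload)
        (by have := hdepth b; omega)
      exact ⟨f, hf.of_update hp, by rwa [run_node_of_apply_eq hf.apply_eq_of_update]⟩

end QTree

theorem collision_query_lower_bound_general (M N t : ℕ) (ht : 1 ≤ t)
    (ρ : Fin M → Option (Fin N))
    (hsize : (Finset.univ.filter fun p => (ρ p).isSome).card ≤ t * N / 2)
    (hhole : ∀ h : Fin N, (Finset.univ.filter fun p => ρ p = some h).card ≤ t)
    (T : QTree M N)
    (hsolve : ∀ f : Fin M → Fin N, (∀ p h, ρ p = some h → f p = h) →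
      (T.run f).1.card = t + 1 ∧ ∀ p ∈ (T.run f).1, f p = (T.run f).2) :
    N / 2 ≤ T.depth := by
  by_contra! hshallow
  have : Nontrivial (Fin N) := Fin.nontrivial_iff_two_le.mpr (by omega)
  have : N / 2 ≤ t * N / 2 := Nat.div_le_div_right (Nat.le_mul_of_pos_left N ht)
  obtain ⟨f, hf, hbad⟩ := QTree.exists_extends_not_isCollision_run T ρ hhole (by omega)
  exact hbad (hsolve f hf)

/-- Adversary lower bound: finding a `(t+1)`-collision of a map from
`M ≥ tN + 1` pigeons to `N` holes, restricted by a partial assignment `ρ`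
fixing at most `tN/2` pigeons with at most `t` per hole, requires at least
`N/2` queries. -/
theorem collision_query_lower_bound (M N t : ℕ) (ht : 1 ≤ t)
    (hM : t * N + 1 ≤ M)
    (ρ : Fin M → Option (Fin N))
    (hsize : (Finset.univ.filter fun p => (ρ p).isSome).card ≤ t * N / 2)
    (hhole : ∀ h : Fin N, (Finset.univ.filter fun p => ρ p = some h).card ≤ t)
    (T : QTree M N)
    (hsolve : ∀ f : Fin M → Fin N, (∀ p h, ρ p = some h → f p = h) →
      (T.run f).1.card = t + 1 ∧ ∀ p ∈ (T.run f).1, f p = (T.run f).2) :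
    N / 2 ≤ T.depth :=
  collision_query_lower_bound_general M N t ht ρ hsize hhole T hsolve
end

section
/- If a(n) ≤ b(n) for all n, then any t-collision instance h : [(a(n)−1)·N + 1] → [N] can be extended to a map h' : [(b(n)−1)·N + 1] → [N] by adding (b(n)−a(n))·N dummy pigeons, with each group of N dummy pigeons mapped bijectively to the N holes, such that every b(n)-collision in h' contains at least a(n) pigeons that are original (non-dummy) and hence yields an a(n)-collision in h. -/
/-!
Pigeon `A + j` is sent to hole `j mod N`, so the dummies `A, …, B - 1` form at most `k` blocks of
`N` consecutive pigeons when `B ≤ A + k * N`, and each block puts exactly one pigeon into each hole.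
Hence a hole holds at most `k` dummies, and any `m + k` pigeons sharing a hole include `m`
original ones.
-/

open Finset

section CyclicPadding

variable {A B N : ℕ} [NeZero N]

def cyclicPadding (h : Fin A → Fin N) (B : ℕ) (i : Fin B) : Fin N :=
  if hi : (i : ℕ) < A then h ⟨i, hi⟩ else Fin.ofNat N (i - A)

theorem cyclicPadding_castLE (h : Fin A → Fin N) (hAB : A ≤ B) (i : Fin A) :
    cyclicPadding h B (Fin.castLE hAB i) = h i := by
  simp [cyclicPadding]

theorem val_cyclicPadding_of_le (h : Fin A → Fin N) {i : Fin B} (hi : A ≤ i) :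
    (cyclicPadding h B i : ℕ) = (i - A) % N := by
  simp [cyclicPadding, hi.not_gt]

theorem card_dummies_le_of_forall_cyclicPadding_eq (h : Fin A → Fin N) {k : ℕ}
    (hB : B ≤ A + k * N) {s : Finset (Fin B)} {y : Fin N}
    (hs : ∀ p ∈ s, cyclicPadding h B p = y) :
    #{p ∈ s | ¬ p.val < A} ≤ k := by
  have hmod : ∀ p ∈ {p ∈ s | ¬ p.val < A}, A ≤ (p : ℕ) ∧ ((p : ℕ) - A) % N = y := by
    intro p hp
    obtain ⟨hps, hpA⟩ := mem_filter.1 hp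
    have hA : A ≤ (p : ℕ) := not_lt.1 hpA
    exact ⟨hA, val_cyclicPadding_of_le h hA ▸ congrArg Fin.val (hs p hps)⟩
  calc #{p ∈ s | ¬ p.val < A}
      ≤ #(range k) := card_le_card_of_injOn (fun p => ((p : ℕ) - A) / N) ?_ ?_
    _ = k := card_range k
  · intro p hp
    have : (p : ℕ) - A < N * k := by
      have := (hmod p hp).1
      have := p.isLt
      rw [mul_comm]
      omega
    exact mem_range.2 (Nat.div_lt_of_lt_mul this)
  · intro p hp q hq hpq
    obtain ⟨hpA, hpy⟩ := hmod p hp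
    obtain ⟨hqA, hqy⟩ := hmod q hq
    have hsub : (p : ℕ) - A = q - A := by
      rw [← Nat.div_add_mod ((p : ℕ) - A) N, ← Nat.div_add_mod ((q : ℕ) - A) N, hpy, hqy]
      exact congrArg (N * · + y) hpq
    exact Fin.ext (by omega)

theorem exists_originals_of_forall_cyclicPadding_eq (h : Fin A → Fin N) (hAB : A ≤ B) {k : ℕ}
    (hB : B ≤ A + k * N) {s : Finset (Fin B)} {y : Fin N}
    (hs : ∀ p ∈ s, cyclicPadding h B p = y) {m : ℕ} (hm : m + k ≤ #s) :
    ∃ s' : Finset (Fin A), #s' = m ∧ (∀ p ∈ s', Fin.castLE hAB p ∈ s) ∧ ∀ p ∈ s', h p = y := by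
  let originals := s.preimage (Fin.castLE hAB) (Fin.castLE_injective hAB).injOn
  have hcard : #originals = #{p ∈ s | p.val < A} := by
    simp only [originals, card_preimage, Fin.range_castLE, Set.mem_ofPred_eq]
  have hm' : m ≤ #originals := by
    have := card_filter_add_card_filter_not (s := s) (fun p : Fin B => (p : ℕ) < A)
    have := card_dummies_le_of_forall_cyclicPadding_eq h hB hs
    omega
  obtain ⟨s', hs'sub, hs'card⟩ := exists_subset_card_eq hm'
  have hmem : ∀ p ∈ s', Fin.castLE hAB p ∈ s := fun p hp => mem_preimage.1 (hs'sub hp)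
  exact ⟨s', hs'card, hmem, fun p hp => cyclicPadding_castLE h hAB p ▸ hs _ (hmem p hp)⟩

end CyclicPadding

theorem padding_hierarchy_general (a b : ℕ → ℕ) (n N : ℕ)
    (hab : a n ≤ b n)
    (hAB : (a n - 1) * N + 1 ≤ (b n - 1) * N + 1)
    (h : Fin ((a n - 1) * N + 1) → Fin N) :
    ∃ h' : Fin ((b n - 1) * N + 1) → Fin N,
      (∀ i : Fin ((a n - 1) * N + 1), h' (Fin.castLE hAB i) = h i) ∧
      ∀ s : Finset (Fin ((b n - 1) * N + 1)), s.card = b n →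
        ∀ y : Fin N, (∀ p ∈ s, h' p = y) →
          ∃ s' : Finset (Fin ((a n - 1) * N + 1)), s'.card = a n ∧
            (∀ p ∈ s', Fin.castLE hAB p ∈ s) ∧ ∀ p ∈ s', h p = y := by
  have : NeZero N := ⟨(h 0).pos.ne'⟩
  have hB : (b n - 1) * N + 1 ≤ (a n - 1) * N + 1 + (b n - a n) * N := by
    rw [add_right_comm, ← add_mul]
    gcongr
    omega
  refine ⟨cyclicPadding h _, cyclicPadding_castLE h hAB, fun s hs y hy => ?_⟩
  exact exists_originals_of_forall_cyclicPadding_eq h hAB hB hy (by omega)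

/-- Padding argument for the pigeon hierarchy: adding `(b n - a n)·N` dummy
pigeons (each group mapped bijectively onto the holes) extends an `a(n)`-pigeon
instance `h` to a `b(n)`-pigeon instance `h'` in which every `b(n)`-collision
contains `a(n)` original pigeons with a common hole, i.e. an `a(n)`-collision
of `h`. -/
theorem padding_hierarchy (a b : ℕ → ℕ) (n N : ℕ) (hN : 1 ≤ N)
    (ha : 1 ≤ a n) (hab : a n ≤ b n)
    (hAB : (a n - 1) * N + 1 ≤ (b n - 1) * N + 1)
    (h : Fin ((a n - 1) * N + 1) → Fin N) :
    ∃ h' : Fin ((b n - 1) * N + 1) → Fin N,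
      (∀ i : Fin ((a n - 1) * N + 1), h' (Fin.castLE hAB i) = h i) ∧
      ∀ s : Finset (Fin ((b n - 1) * N + 1)), s.card = b n →
        ∀ y : Fin N, (∀ p ∈ s, h' p = y) →
          ∃ s' : Finset (Fin ((a n - 1) * N + 1)), s'.card = a n ∧
            (∀ p ∈ s', Fin.castLE hAB p ∈ s) ∧ ∀ p ∈ s', h p = y :=
  padding_hierarchy_general a b n N hab hAB h
end

section
/- Let h be a uniformly random permutation of [N] and fix a depth-d decision tree T querying entries of h. Then for the unique index i* with h(i*) = 1, the probability that T queries position i* when evaluated on h is at most d/N. -/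
/-- Decision trees querying positions of a function `[N] → [N]`. -/
inductive PTree (N : ℕ) : Type where
  | leaf : PTree N
  | node : Fin N → (Fin N → PTree N) → PTree N

namespace PTree

def depth {N : ℕ} : PTree N → ℕ
  | .leaf => 0
  | .node _ br => 1 + Finset.univ.sup fun v => (br v).depth

/-- Whether the tree queries position `i` when run on input `f`. -/
def queries {N : ℕ} : PTree N → (Fin N → Fin N) → Fin N → Bool
  | .leaf, _, _ => false
  | .node q br, f, i => (q == i) || (br (f q)).queries f i

end PTree

open Finset

private lemma key {N : ℕ} (z : Fin N) (T : PTree N) :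
    ∀ (s : Finset (Fin N)) (g : Fin N → Fin N),
      Set.InjOn g s → (∀ i ∈ s, g i ≠ z) →
      (Finset.univ.filter fun σ : Equiv.Perm (Fin N) =>
          (∀ i ∈ s, σ i = g i) ∧ T.queries (fun i => σ i) (σ.symm z) = true).card
        * (N - s.card)
      ≤ T.depth *
        (Finset.univ.filter fun σ : Equiv.Perm (Fin N) =>
          ∀ i ∈ s, σ i = g i).card := by
  induction T with
  | leaf =>
      intro s g _ _
      simp [PTree.queries]
  | node q br ih =>
      intro s g hg hz
      set D := Finset.univ.sup fun v => (br v).depth with hD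
      have hdepth : (PTree.node q br).depth = 1 + D := rfl
      set E := Finset.univ.filter (fun σ : Equiv.Perm (Fin N) => ∀ i ∈ s, σ i = g i)
        with hE
      set F := Finset.univ.filter (fun σ : Equiv.Perm (Fin N) =>
          (∀ i ∈ s, σ i = g i) ∧
            (PTree.node q br).queries (fun i => σ i) (σ.symm z) = true) with hF
      by_cases hq : q ∈ s
      · -- the query is already determined
        have hsub : F ⊆ Finset.univ.filter (fun σ : Equiv.Perm (Fin N) =>
            (∀ i ∈ s, σ i = g i) ∧
              (br (g q)).queries (fun i => σ i) (σ.symm z) = true) := by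
          intro σ hσ
          simp only [hF, mem_filter, mem_univ, true_and] at hσ ⊢
          obtain ⟨hP, hQ⟩ := hσ
          refine ⟨hP, ?_⟩
          have hσq : σ q = g q := hP q hq
          have hne : (q == σ.symm z) = false := by
            rw [beq_eq_false_iff_ne]
            intro h
            apply hz q hq
            rw [← hσq, h, Equiv.apply_symm_apply]
          rw [PTree.queries, Bool.or_eq_true, hne] at hQ
          rcases hQ with h | h
          · exact absurd h (by simp)
          · simpa [hσq] using h
        calc F.card * (N - s.card)
            ≤ (Finset.univ.filter (fun σ : Equiv.Perm (Fin N) =>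
                (∀ i ∈ s, σ i = g i) ∧
                  (br (g q)).queries (fun i => σ i) (σ.symm z) = true)).card
                * (N - s.card) := Nat.mul_le_mul_right _ (card_le_card hsub)
          _ ≤ (br (g q)).depth * E.card := ih (g q) s g hg hz
          _ ≤ (1 + D) * E.card := by
              apply Nat.mul_le_mul_right
              exact le_trans (Finset.le_sup (f := fun v => (br v).depth) (mem_univ (g q)))
                (Nat.le_add_left D 1)
          _ = (PTree.node q br).depth * E.card := by rw [hdepth]
      · -- fresh query
        have hscard : s.card < N := by
          have h1 : s ⊂ Finset.univ := by
            rw [Finset.ssubset_univ_iff]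
            intro h; exact hq (h ▸ mem_univ q)
          simpa using Finset.card_lt_card h1
        set k := N - s.card with hk
        have hk1 : 1 ≤ k := Nat.le_sub_of_add_le (by omega)
        set t := s.image g with ht
        have htcard : t.card = s.card := Finset.card_image_of_injOn hg
        have hzt : z ∉ t := by
          intro h
          obtain ⟨i, hi, hgi⟩ := mem_image.mp h
          exact hz i hi hgi
        have htc : tᶜ.card = k := by
          rw [Finset.card_compl, htcard, Fintype.card_fin]
        set Ef := fun v : Fin N => E.filter (fun σ : Equiv.Perm (Fin N) => σ q = v)
          with hEf
        set Ff := fun v : Fin N => F.filter (fun σ : Equiv.Perm (Fin N) => σ q = v)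
          with hFf
        have hFE : F ⊆ E := by
          intro σ hσ
          simp only [hF, hE, mem_filter, mem_univ, true_and] at hσ ⊢
          exact hσ.1
        -- fibers over image values are empty
        have hEt : ∀ v ∈ t, Ef v = ∅ := by
          intro v hv
          obtain ⟨i, hi, hgi⟩ := mem_image.mp hv
          rw [Finset.eq_empty_iff_forall_notMem]
          intro σ hσ
          simp only [hEf, hE, mem_filter, mem_univ, true_and] at hσ
          obtain ⟨hP, hqv⟩ := hσ
          have : σ i = σ q := by rw [hP i hi, hgi, hqv]
          exact hq (σ.injective this ▸ hi)
        -- all non-image fibers have the same size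
        have hswap : ∀ v ∉ t, (Ef v).card = (Ef z).card := by
          intro v hv
          have hmem : ∀ w, w ∉ t → ∀ σ : Equiv.Perm (Fin N),
              σ ∈ Ef w ↔ ((∀ i ∈ s, σ i = g i) ∧ σ q = w) := by
            intro w hw σ
            simp [hEf, hE, mem_filter]
          refine Finset.card_bij' (fun σ _ => σ.trans (Equiv.swap v z))
            (fun σ _ => σ.trans (Equiv.swap v z)) ?hi ?hj ?li ?ri
          case hi =>
            intro σ hσ
            rw [hmem v hv] at hσ
            rw [hmem z hzt]
            constructor
            · intro i hi
              simp only [Equiv.trans_apply, hσ.1 i hi]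
              exact Equiv.swap_apply_of_ne_of_ne
                (fun h => hv (h ▸ mem_image_of_mem g hi)) (hz i hi)
            · simp [Equiv.trans_apply, hσ.2]
          case hj =>
            intro σ hσ
            rw [hmem z hzt] at hσ
            rw [hmem v hv]
            constructor
            · intro i hi
              simp only [Equiv.trans_apply, hσ.1 i hi]
              exact Equiv.swap_apply_of_ne_of_ne
                (fun h => hv (h ▸ mem_image_of_mem g hi)) (hz i hi)
            · simp [Equiv.trans_apply, hσ.2, Equiv.swap_apply_right]
          case li =>
            intro σ _
            ext x
            simp [Equiv.trans_apply, Equiv.swap_apply_self]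
          case ri =>
            intro σ _
            ext x
            simp [Equiv.trans_apply, Equiv.swap_apply_self]
        set M := (Ef z).card with hM
        -- total counts as fiber sums
        have hEsum : E.card = ∑ v ∈ tᶜ, (Ef v).card := by
          rw [Finset.card_eq_sum_card_fiberwise
            (f := fun σ : Equiv.Perm (Fin N) => σ q) (t := Finset.univ)
            (fun σ _ => mem_univ _)]
          rw [← Finset.sum_subset (Finset.subset_univ tᶜ)]
          intro v _ hv
          rw [Finset.notMem_compl] at hv
          rw [show E.filter (fun σ : Equiv.Perm (Fin N) => σ q = v) = Ef v from rfl,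
            hEt v hv, card_empty]
        have hEcard : E.card = k * M := by
          rw [hEsum]
          rw [Finset.sum_congr rfl (fun v hv => hswap v (Finset.mem_compl.mp hv))]
          rw [Finset.sum_const, htc, smul_eq_mul]
        have hFsum : F.card = ∑ v ∈ tᶜ, (Ff v).card := by
          rw [Finset.card_eq_sum_card_fiberwise
            (f := fun σ : Equiv.Perm (Fin N) => σ q) (t := Finset.univ)
            (fun σ _ => mem_univ _)]
          rw [← Finset.sum_subset (Finset.subset_univ tᶜ)]
          intro v _ hv
          rw [Finset.notMem_compl] at hv
          have : Ff v ⊆ Ef v := Finset.filter_subset_filter _ hFE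
          rw [show F.filter (fun σ : Equiv.Perm (Fin N) => σ q = v) = Ff v from rfl]
          rw [Finset.card_eq_zero, ← Finset.subset_empty]
          exact (hEt v hv) ▸ this
        -- branch bound for fresh values
        have hbranch : ∀ v ∉ t, v ≠ z → (Ff v).card * (k - 1) ≤ D * M := by
          intro v hv hvz
          set g' := Function.update g q v with hg'
          have hg'self : g' q = v := by
            rw [hg']; exact Function.update_self _ _ _
          have hgq' : ∀ i ∈ s, g' i = g i := by
            intro i hi
            rw [hg']
            exact Function.update_of_ne (by rintro rfl; exact hq hi) _ _
          have hinj' : Set.InjOn g' ↑(insert q s) := by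
            intro a ha b hb hab
            simp only [Finset.coe_insert, Set.mem_insert_iff, Finset.mem_coe] at ha hb
            rcases ha with rfl | ha <;> rcases hb with rfl | hb
            · rfl
            · exfalso; rw [hg'self, hgq' b hb] at hab
              exact hv (by rw [hab]; exact mem_image_of_mem g hb)
            · exfalso; rw [hg'self, hgq' a ha] at hab
              exact hv (by rw [← hab]; exact mem_image_of_mem g ha)
            · exact hg ha hb (by rwa [hgq' a ha, hgq' b hb] at hab)
          have hz' : ∀ i ∈ insert q s, g' i ≠ z := by
            intro i hi
            rcases Finset.mem_insert.mp hi with rfl | hi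
            · rw [hg'self]; exact hvz
            · rw [hgq' i hi]; exact hz i hi
          have hEeq : (Finset.univ.filter (fun σ : Equiv.Perm (Fin N) =>
              ∀ i ∈ insert q s, σ i = g' i)) = Ef v := by
            ext σ
            simp only [hEf, hE, mem_filter, mem_univ, true_and, Finset.mem_insert,
              Finset.filter_filter]
            constructor
            · intro h
              refine ⟨fun i hi => by rw [h i (Or.inr hi), hgq' i hi], ?_⟩
              rw [h q (Or.inl rfl), hg'self]
            · rintro ⟨hP, hqv⟩ i hi
              rcases hi with rfl | hi
              · rw [hqv, hg'self]
              · rw [hP i hi, hgq' i hi]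
          have hFsub : Ff v ⊆ Finset.univ.filter (fun σ : Equiv.Perm (Fin N) =>
              (∀ i ∈ insert q s, σ i = g' i) ∧
                (br v).queries (fun i => σ i) (σ.symm z) = true) := by
            intro σ hσ
            simp only [hFf, hF, Finset.filter_filter, mem_filter, mem_univ, true_and] at hσ
            obtain ⟨⟨hP, hQ⟩, hqv⟩ := hσ
            simp only [mem_filter, mem_univ, true_and]
            have hPP : ∀ i ∈ insert q s, σ i = g' i := by
              have hmemEf : σ ∈ Ef v :=
                Finset.mem_filter.mpr ⟨Finset.mem_filter.mpr ⟨mem_univ σ, hP⟩, hqv⟩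
              rw [← hEeq] at hmemEf
              simpa [mem_filter] using hmemEf
            refine ⟨hPP, ?_⟩
            have hne : (q == σ.symm z) = false := by
              rw [beq_eq_false_iff_ne]
              intro h
              apply hvz
              rw [← hqv, h, Equiv.apply_symm_apply]
            rw [PTree.queries, Bool.or_eq_true, hne] at hQ
            rcases hQ with h | h
            · exact absurd h (by simp)
            · simpa [hqv] using h
          have hcard' : (insert q s).card = s.card + 1 :=
            Finset.card_insert_of_notMem hq
          have := ih v (insert q s) g' hinj' hz'
          rw [hEeq, hcard'] at this
          have hkk : N - (s.card + 1) = k - 1 := by omega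
          rw [hkk] at this
          calc (Ff v).card * (k - 1)
              ≤ (Finset.univ.filter (fun σ : Equiv.Perm (Fin N) =>
                  (∀ i ∈ insert q s, σ i = g' i) ∧
                    (br v).queries (fun i => σ i) (σ.symm z) = true)).card * (k - 1) :=
                Nat.mul_le_mul_right _ (card_le_card hFsub)
            _ ≤ (br v).depth * (Ef v).card := this
            _ ≤ D * M := by
                rw [hswap v hv]
                exact Nat.mul_le_mul_right _
                  (Finset.le_sup (f := fun v => (br v).depth) (mem_univ v))
        -- the z fiber
        have hFz : (Ff z).card ≤ M := card_le_card (Finset.filter_subset_filter _ hFE)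
        -- combine
        have hmain : F.card ≤ (1 + D) * M := by
          rcases Nat.lt_or_ge k 2 with hk2 | hk2
          · have hkeq : k = 1 := by omega
            have : F.card ≤ E.card := card_le_card hFE
            calc F.card ≤ E.card := this
              _ = k * M := hEcard
              _ = M := by rw [hkeq, one_mul]
              _ ≤ (1 + D) * M := Nat.le_mul_of_pos_left _ (by omega)
          · have hstep : F.card * (k - 1) ≤ (1 + D) * M * (k - 1) := by
              rw [hFsum, Finset.sum_mul]
              have hzc : z ∈ tᶜ := Finset.mem_compl.mpr hzt
              rw [← Finset.add_sum_erase _ _ hzc]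
              have h1 : (Ff z).card * (k - 1) ≤ M * (k - 1) :=
                Nat.mul_le_mul_right _ hFz
              have h2 : ∑ v ∈ tᶜ.erase z, (Ff v).card * (k - 1)
                  ≤ ∑ _v ∈ tᶜ.erase z, D * M := by
                apply Finset.sum_le_sum
                intro v hv
                have hv' := Finset.mem_of_mem_erase hv
                exact hbranch v (Finset.mem_compl.mp hv') (Finset.ne_of_mem_erase hv)
              have h3 : ∑ _v ∈ tᶜ.erase z, D * M = (k - 1) * (D * M) := by
                rw [Finset.sum_const, smul_eq_mul, Finset.card_erase_of_mem hzc, htc]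
              calc (Ff z).card * (k - 1) + ∑ v ∈ tᶜ.erase z, (Ff v).card * (k - 1)
                  ≤ M * (k - 1) + ∑ _v ∈ tᶜ.erase z, D * M := Nat.add_le_add h1 h2
                _ = M * (k - 1) + (k - 1) * (D * M) := by rw [h3]
                _ = (1 + D) * M * (k - 1) := by ring
            exact Nat.le_of_mul_le_mul_right hstep (by omega)
        calc F.card * k ≤ (1 + D) * M * k := Nat.mul_le_mul_right _ hmain
          _ = (1 + D) * (k * M) := by ring
          _ = (PTree.node q br).depth * E.card := by rw [hdepth, hEcard]

/-- For a uniformly random permutation `σ` of `[N]` and a depth `≤ d` decision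
tree `T` querying entries of `σ`, the probability that `T` queries the unique
position `i*` with `σ i* = 0` is at most `d/N`. -/
theorem random_permutation_query_bound (N d : ℕ) (hN : 0 < N)
    (T : PTree N) (hT : T.depth ≤ d) :
    ((Finset.univ.filter fun σ : Equiv.Perm (Fin N) =>
        T.queries (fun i => σ i) (σ.symm ⟨0, hN⟩) = true).card : ℝ)
      / (Fintype.card (Equiv.Perm (Fin N)) : ℝ) ≤ (d : ℝ) / (N : ℝ) := by
  have h := key (⟨0, hN⟩ : Fin N) T ∅ id (by simp) (by simp)
  simp only [Finset.notMem_empty, false_implies, implies_true, true_and,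
    Finset.card_empty, Nat.sub_zero, Finset.filter_true] at h
  rw [Finset.card_univ] at h
  have hC : (0:ℝ) < (Fintype.card (Equiv.Perm (Fin N)) : ℝ) := by
    exact_mod_cast Fintype.card_pos
  rw [div_le_div_iff₀ hC (by exact_mod_cast hN)]
  exact_mod_cast le_trans h (Nat.mul_le_mul_right _ hT)
end

section
/- Let U₀ = [2^(n−1) + 1] and P : U₀ → {0,1}^(n−1). Define iteratively: U_i is the larger of the two subsets of U_{i−1} determined by the i-th output bit of P (ties broken arbitrarily). Then for all i ∈ [n−1], all elements of U_i agree on the first i bits of P, and |U_{n−i}| ≥ 2^(i−1) + 1 (in particular |U_i| ≥ ⌈|U_{i−1}|/2⌉). Consequently there exist n distinct elements a₁,…,aₙ ∈ U₀ such that P(a_j),…,P(a_n) agree on the prefix of length j for every j ∈ [n−1], proving UPLC is total on a universe of size 2^(n−1)+1. -/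
/-!
Each step keeps the larger half of the current candidate set, so an invariant `|U i| ≥ 2^(m-i) + 1`
survives all `m = n - 1` steps, while the elements of `U i` agree on the first `i` bits.
Choosing greedily, from the last index down, distinct `a r ∈ U (min (r + 1) m)` is possible because
`U (min (r + 1) m)` has more than `n - 1 - r` elements, and then `a r` and `a r'` with `j ≤ r, r'`
both lie in `U (j + 1)`, hence agree on the prefix of length `j + 1`.
-/

open Finset

theorem exists_injective_mem_of_le_add_card {α : Type*} {n : ℕ} (S : Fin n → Finset α)
    (hS : ∀ k : Fin n, n ≤ k + (S k).card) :
    ∃ a : Fin n → α, Function.Injective a ∧ ∀ k, a k ∈ S k := by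
  classical
  induction n with
  | zero => exact ⟨Fin.elim0, fun k => k.elim0, fun k => k.elim0⟩
  | succ n ih =>
    obtain ⟨g, hg, hgS⟩ := ih (fun k => S k.succ) fun k => by
      have := hS k.succ
      simp only [Fin.val_succ] at this
      omega
    have hcard : (univ.image g).card < (S 0).card := by
      have hS0 := hS 0
      have himage := (card_image_le (s := univ) (f := g)).trans_eq (card_fin n)
      simp only [Fin.val_zero] at hS0
      omega
    obtain ⟨x, hxS, hxg⟩ := exists_mem_notMem_of_card_lt_card hcard
    refine ⟨Fin.cons x g, Fin.cons_injective_iff.mpr ⟨?_, hg⟩, Fin.cases hxS hgS⟩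
    rintro ⟨k, rfl⟩
    exact hxg (mem_image_of_mem g (mem_univ k))

structure IsHalvingChain {α β : Type*} {m : ℕ} (P : α → Fin m → β) (U : ℕ → Finset α) :
    Prop where
  subset : ∀ i < m, U (i + 1) ⊆ U i
  agree : ∀ i (hi : i < m), ∀ u ∈ U (i + 1), ∀ v ∈ U (i + 1), P u ⟨i, hi⟩ = P v ⟨i, hi⟩
  card_le : ∀ i < m, (U i).card ≤ 2 * (U (i + 1)).card

namespace IsHalvingChain

variable {α β : Type*} {m : ℕ} {P : α → Fin m → β} {U : ℕ → Finset α}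

theorem antitone (h : IsHalvingChain P U) {k l : ℕ} (hkl : k ≤ l) (hl : l ≤ m) : U l ⊆ U k := by
  induction l, hkl using Nat.le_induction with
  | base => rfl
  | succ l _ ih => exact (h.subset l hl).trans (ih (by omega))

theorem prefix_agree (h : IsHalvingChain P U) {i : ℕ} (hi : i ≤ m) :
    ∀ u ∈ U i, ∀ v ∈ U i, ∀ x : Fin m, (x : ℕ) < i → P u x = P v x := by
  induction i with
  | zero => exact fun _ _ _ _ x hx => absurd hx (Nat.not_lt_zero _)
  | succ i ih =>
    intro u hu v hv x hx
    rcases Nat.lt_succ_iff_lt_or_eq.mp hx with hlt | rfl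
    · exact ih (by omega) u (h.subset i hi hu) v (h.subset i hi hv) x hlt
    · exact h.agree x x.isLt u hu v hv

theorem card_ge (h : IsHalvingChain P U) (h0 : 2 ^ m + 1 ≤ (U 0).card) {i : ℕ} (hi : i ≤ m) :
    2 ^ (m - i) + 1 ≤ (U i).card := by
  induction i with
  | zero => simpa using h0
  | succ i ih =>
    have hpow : 2 ^ (m - i) = 2 * 2 ^ (m - (i + 1)) := by
      rw [← pow_succ']
      congr 1
      omega
    have := (ih (by omega)).trans (h.card_le i hi)
    omega

theorem exists_injective_suffix_agree (h : IsHalvingChain P U) (h0 : 2 ^ m + 1 ≤ (U 0).card)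
    {n : ℕ} (hn : n ≤ m + 1) :
    ∃ a : Fin n → α, Function.Injective a ∧
      ∀ j : ℕ, j < m → ∀ r r' : Fin n, j ≤ (r : ℕ) → j ≤ (r' : ℕ) →
        ∀ x : Fin m, (x : ℕ) ≤ j → P (a r) x = P (a r') x := by
  obtain ⟨a, ha, haU⟩ := exists_injective_mem_of_le_add_card (fun r : Fin n => U (min (r + 1) m))
    fun r => by
      have hcard := h.card_ge h0 (min_le_right (r + 1 : ℕ) m)
      have : m - min (r + 1 : ℕ) m < 2 ^ (m - min (r + 1 : ℕ) m) := Nat.lt_two_pow_self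
      omega
  refine ⟨a, ha, fun j hj r r' hr hr' x hx => ?_⟩
  have hmem : ∀ s : Fin n, j ≤ (s : ℕ) → a s ∈ U (x + 1) := fun s hs =>
    h.antitone (by omega) (min_le_right _ _) (haU s)
  exact h.prefix_agree x.isLt _ (hmem r hr) _ (hmem r' hr') x (Nat.lt_succ_self x)

end IsHalvingChain

theorem uplc_total_general (n : ℕ)
    (P : Fin (2 ^ (n - 1) + 1) → Fin (n - 1) → Bool)
    (U : ℕ → Finset (Fin (2 ^ (n - 1) + 1)))
    (hU0 : U 0 = Finset.univ)
    (hstep : ∀ i, ∀ hi : i < n - 1, U (i + 1) ⊆ U i ∧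
      (∀ u ∈ U (i + 1), ∀ v ∈ U (i + 1), P u ⟨i, hi⟩ = P v ⟨i, hi⟩) ∧
      (U i).card ≤ 2 * (U (i + 1)).card) :
    (∀ i, i ≤ n - 1 →
      (∀ u ∈ U i, ∀ v ∈ U i, ∀ x : Fin (n - 1), (x : ℕ) < i → P u x = P v x) ∧
      2 ^ (n - 1 - i) + 1 ≤ (U i).card) ∧
    ∃ a : Fin n → Fin (2 ^ (n - 1) + 1), Function.Injective a ∧
      ∀ j : ℕ, j < n - 1 → ∀ r r' : Fin n, j ≤ (r : ℕ) → j ≤ (r' : ℕ) →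
        ∀ x : Fin (n - 1), (x : ℕ) ≤ j → P (a r) x = P (a r') x := by
  have hchain : IsHalvingChain P U :=
    ⟨fun i hi => (hstep i hi).1, fun i hi => (hstep i hi).2.1, fun i hi => (hstep i hi).2.2⟩
  have h0 : 2 ^ (n - 1) + 1 ≤ (U 0).card := by simp [hU0]
  exact ⟨fun i hi => ⟨hchain.prefix_agree hi, hchain.card_ge h0 hi⟩,
    hchain.exists_injective_suffix_agree h0 (by omega)⟩

/-- Totality of UPLC on a universe of size `2^(n-1)+1` via the non-adaptive
iterated pigeonhole: for any iterative halving sequence `U`, where `U (i+1)`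
is the larger part of `U i` under the `i`-th bit of `P`, all elements of `U i`
agree on the first `i` bits and `|U i| ≥ 2^(n-1-i) + 1`; consequently there
exist `n` distinct elements `a₁,…,aₙ` such that `P(a_j),…,P(a_n)` agree on the
prefix of length `j` for every `j ∈ [n-1]`. -/
theorem uplc_total (n : ℕ) (hn : 1 ≤ n)
    (P : Fin (2 ^ (n - 1) + 1) → Fin (n - 1) → Bool)
    (U : ℕ → Finset (Fin (2 ^ (n - 1) + 1)))
    (hU0 : U 0 = Finset.univ)
    (hstep : ∀ i, ∀ hi : i < n - 1, U (i + 1) ⊆ U i ∧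
      (∀ u ∈ U (i + 1), ∀ v ∈ U (i + 1), P u ⟨i, hi⟩ = P v ⟨i, hi⟩) ∧
      (U i).card ≤ 2 * (U (i + 1)).card) :
    (∀ i, i ≤ n - 1 →
      (∀ u ∈ U i, ∀ v ∈ U i, ∀ x : Fin (n - 1), (x : ℕ) < i → P u x = P v x) ∧
      2 ^ (n - 1 - i) + 1 ≤ (U i).card) ∧
    ∃ a : Fin n → Fin (2 ^ (n - 1) + 1), Function.Injective a ∧
      ∀ j : ℕ, j < n - 1 → ∀ r r' : Fin n, j ≤ (r : ℕ) → j ≤ (r' : ℕ) →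
        ∀ x : Fin (n - 1), (x : ℕ) ≤ j → P (a r) x = P (a r') x :=
  uplc_total_general n P U hU0 hstep
end
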